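/- arXiv:2211.00328 — 6 statements merged into one kernel-verified Lean document; each statement's English description precedes it below -/
import Mathlib

section
/- There exists a unit upper triangular matrix C ∈ ℝ^{m×m} such that A_S = C A, where A_S is the matrix whose i-th row is (Q_i a_i)^T. -/
open Matrix Filter

noncomputable def projMat {n : ℕ} (a : Fin n → ℝ) : Matrix (Fin n) (Fin n) ℝ :=
  1 - (a ⬝ᵥ a)⁻¹ • Matrix.vecMulVec a a

noncomputable def vnorm {n : ℕ} (x : Fin n → ℝ) : ℝ := Real.sqrt (x ⬝ᵥ x)

/-- `x ∈ N(A)^⊥`: `x` is orthogonal to every vector of the null space of `A`. -/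
def inNullPerp {m n : ℕ} (A : Matrix (Fin m) (Fin n) ℝ) (x : Fin n → ℝ) : Prop :=
  ∀ z : Fin n → ℝ, A.mulVec z = 0 → x ⬝ᵥ z = 0

/-- `P_k` (0-indexed): the projection onto the hyperplane orthogonal to row `k` of `A`. -/
noncomputable def Pnat {m n : ℕ} (A : Matrix (Fin m) (Fin n) ℝ) (k : ℕ) :
    Matrix (Fin n) (Fin n) ℝ :=
  if h : k < m then projMat (A ⟨k, h⟩) else 1

/-- descending product `f (lo+len-1) * ⋯ * f (lo+1) * f lo` -/
noncomputable def prodDesc {α : Type*} [Monoid α] (f : ℕ → α) (lo : ℕ) : ℕ → α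
  | 0 => 1
  | k + 1 => f (lo + k) * prodDesc f lo k

/-- ascending product `f lo * f (lo+1) * ⋯ * f (lo+len-1)` -/
noncomputable def prodAsc {α : Type*} [Monoid α] (f : ℕ → α) (lo : ℕ) : ℕ → α
  | 0 => 1
  | k + 1 => prodAsc f lo k * f (lo + k)

/-- `Q_j = P_m ⋯ P_{j+1}` (paper indices); here `j : Fin m` is 0-indexed. -/
noncomputable def Qmat {m n : ℕ} (A : Matrix (Fin m) (Fin n) ℝ) (j : Fin m) :
    Matrix (Fin n) (Fin n) ℝ :=
  prodDesc (Pnat A) ((j : ℕ) + 1) (m - 1 - (j : ℕ))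

/-- `Q = P_m P_{m-1} ⋯ P_1`. -/
noncomputable def Qfull {m n : ℕ} (A : Matrix (Fin m) (Fin n) ℝ) : Matrix (Fin n) (Fin n) ℝ :=
  prodDesc (Pnat A) 0 m

/-- `A_S = (Q_1 a_1, …, Q_m a_m)ᵀ`. -/
noncomputable def ASmat {m n : ℕ} (A : Matrix (Fin m) (Fin n) ℝ) : Matrix (Fin m) (Fin n) ℝ :=
  fun i => (Qmat A i).mulVec (A i)

/-- `M = diag (1/‖a_1‖², …, 1/‖a_m‖²)`. -/
noncomputable def Mdiag {m n : ℕ} (A : Matrix (Fin m) (Fin n) ℝ) : Matrix (Fin m) (Fin m) ℝ :=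
  Matrix.diagonal fun i => (A i ⬝ᵥ A i)⁻¹

/-- `Q̄_1 = Q̄_m = 0`, `Q̄_2 = I`, `Q̄_i = P_2 ⋯ P_{i-1}` (paper indices); `i : Fin m` 0-indexed. -/
noncomputable def barQmat {m n : ℕ} (A : Matrix (Fin m) (Fin n) ℝ) (i : Fin m) :
    Matrix (Fin n) (Fin n) ℝ :=
  if (i : ℕ) = 0 ∨ (i : ℕ) = m - 1 then 0 else prodAsc (Pnat A) 1 ((i : ℕ) - 1)

/-- `Q̄ = P_2 P_3 ⋯ P_{m-1}`. -/
noncomputable def barQfull {m n : ℕ} (A : Matrix (Fin m) (Fin n) ℝ) : Matrix (Fin n) (Fin n) ℝ :=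
  prodAsc (Pnat A) 1 (m - 2)

/-- `Ā_S = (Q̄_1 a_1, …, Q̄_m a_m)ᵀ`. -/
noncomputable def barASmat {m n : ℕ} (A : Matrix (Fin m) (Fin n) ℝ) : Matrix (Fin m) (Fin n) ℝ :=
  fun i => (barQmat A i).mulVec (A i)

/-- `h_{p,q} = a_pᵀ a_q / ‖a_q‖²`. -/
noncomputable def hcoef {m n : ℕ} (A : Matrix (Fin m) (Fin n) ℝ) (p q : Fin m) : ℝ :=
  (A p ⬝ᵥ A q) / (A q ⬝ᵥ A q)

/-! Each `P_k` changes a vector only by a multiple of `a_k`, so `Q_i a_i` is `a_i` plus a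
combination of the later rows `a_{i+1}, …, a_m`; those coefficients fill the strictly upper part
of `C`. -/

lemma projMat_mulVec {n : ℕ} (a w : Fin n → ℝ) :
    projMat a *ᵥ w = w - ((a ⬝ᵥ a)⁻¹ * (a ⬝ᵥ w)) • a := by
  rw [projMat, sub_mulVec, one_mulVec, smul_mulVec, vecMulVec_mulVec, op_smul_eq_smul,
    smul_smul]

lemma Pnat_mulVec_eq_add_vecMul {m n : ℕ} (A : Matrix (Fin m) (Fin n) ℝ) (k : ℕ)
    (w : Fin n → ℝ) :
    ∃ d : Fin m → ℝ, (∀ i : Fin m, (i : ℕ) ≠ k → d i = 0) ∧ Pnat A k *ᵥ w = w + d ᵥ* A := by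
  by_cases hk : k < m
  · refine ⟨Pi.single ⟨k, hk⟩ (-((A ⟨k, hk⟩ ⬝ᵥ A ⟨k, hk⟩)⁻¹ * (A ⟨k, hk⟩ ⬝ᵥ w))), ?_, ?_⟩
    · intro i hi
      exact Pi.single_eq_of_ne (fun h => hi (congrArg Fin.val h)) _
    · rw [Pnat, dif_pos hk, projMat_mulVec, single_vecMul, neg_smul, sub_eq_add_neg]
      rfl
  · exact ⟨0, fun _ _ => rfl, by rw [Pnat, dif_neg hk, one_mulVec, zero_vecMul, add_zero]⟩

lemma prodDesc_Pnat_mulVec_eq_add_vecMul {m n : ℕ} (A : Matrix (Fin m) (Fin n) ℝ)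
    (lo len : ℕ) (v : Fin n → ℝ) :
    ∃ d : Fin m → ℝ, (∀ i : Fin m, (i : ℕ) < lo → d i = 0) ∧
      prodDesc (Pnat A) lo len *ᵥ v = v + d ᵥ* A := by
  induction len with
  | zero => exact ⟨0, fun _ _ => rfl, by rw [prodDesc, one_mulVec, zero_vecMul, add_zero]⟩
  | succ k ih =>
    obtain ⟨d, hd, hv⟩ := ih
    obtain ⟨e, he, hw⟩ := Pnat_mulVec_eq_add_vecMul A (lo + k) (v + d ᵥ* A)
    refine ⟨d + e, fun i hi => ?_, ?_⟩
    · rw [Pi.add_apply, hd i hi, he i (by omega), add_zero]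
    · rw [prodDesc, ← mulVec_mulVec, hv, hw, add_vecMul, add_assoc]

theorem stmt5_general {m n : ℕ} (A : Matrix (Fin m) (Fin n) ℝ) :
    ∃ C : Matrix (Fin m) (Fin m) ℝ,
      (∀ i : Fin m, C i i = 1) ∧ (∀ i j : Fin m, j < i → C i j = 0) ∧ ASmat A = C * A := by
  choose d hd hrow using fun i : Fin m =>
    prodDesc_Pnat_mulVec_eq_add_vecMul A ((i : ℕ) + 1) (m - 1 - (i : ℕ)) (A i)
  refine ⟨1 + of d, fun i => ?_, fun i j hji => ?_, ?_⟩
  · simp [hd i i (Nat.lt_succ_self _)]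
  · simp [hd i j (Nat.lt_succ_of_lt hji), one_apply_ne hji.ne']
  · rw [Matrix.add_mul, Matrix.one_mul]
    funext i
    exact hrow i

/-- there is a unit upper triangular `C` with `A_S = C A`. -/
theorem stmt5 {m n : ℕ} (A : Matrix (Fin m) (Fin n) ℝ) (hA : ∀ i, A i ≠ 0) :
    ∃ C : Matrix (Fin m) (Fin m) ℝ,
      (∀ i : Fin m, C i i = 1) ∧ (∀ i j : Fin m, j < i → C i j = 0) ∧ ASmat A = C * A :=
  stmt5_general A
end

section
/- The full Kaczmarz sweep product Q = P_m P_{m-1} ⋯ P_1 satisfies Q = I - A_S^T M A, where M = diag(1/||a_1||^2, …, 1/||a_m||^2) and A_S = (Q_1 a_1, …, Q_m a_m)^T. -/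
open Matrix Filter

lemma prodDesc_succ_right {α : Type*} [Monoid α] (f : ℕ → α) (lo : ℕ) :
    ∀ k, prodDesc f lo (k+1) = prodDesc f (lo+1) k * f lo
  | 0 => by simp [prodDesc]
  | k+1 => by
      have h := prodDesc_succ_right f lo k
      simp only [prodDesc] at *
      rw [h, ← mul_assoc, show lo + (k+1) = (lo+1)+k by omega]

lemma mul_vecMulVec {n : ℕ} (X : Matrix (Fin n) (Fin n) ℝ) (a b : Fin n → ℝ) :
    X * Matrix.vecMulVec a b = Matrix.vecMulVec (X.mulVec a) b := by
  ext x y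
  simp [Matrix.mul_apply, Matrix.vecMulVec_apply, Matrix.mulVec, dotProduct,
    Finset.sum_mul, mul_assoc]

/-- `Q = P_m ⋯ P_1 = I - A_Sᵀ M A`. -/
theorem stmt7 {m n : ℕ} (A : Matrix (Fin m) (Fin n) ℝ) (hA : ∀ i, A i ≠ 0) :
    Qfull A = 1 - (ASmat A)ᵀ * Mdiag A * A := by
  classical
  set T : ℕ → Matrix (Fin n) (Fin n) ℝ := fun i =>
    if h : i < m then (A ⟨i,h⟩ ⬝ᵥ A ⟨i,h⟩)⁻¹ •
      Matrix.vecMulVec ((prodDesc (Pnat A) (i+1) (m-1-i)).mulVec (A ⟨i,h⟩)) (A ⟨i,h⟩)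
    else 0 with hT
  have key : ∀ d, d ≤ m → prodDesc (Pnat A) (m-d) d = 1 - ∑ i ∈ Finset.Ico (m-d) m, T i := by
    intro d
    induction d with
    | zero => intro _; simp [prodDesc]
    | succ d ih =>
      intro hd
      have hd' : d ≤ m := by omega
      have hlt : m - (d+1) < m := by omega
      have h1 : m - (d+1) + 1 = m - d := by omega
      rw [prodDesc_succ_right, h1, ih hd']
      set j := m - (d+1) with hj
      have hP : Pnat A j = 1 - (A ⟨j,hlt⟩ ⬝ᵥ A ⟨j,hlt⟩)⁻¹ •
          Matrix.vecMulVec (A ⟨j,hlt⟩) (A ⟨j,hlt⟩) := by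
        simp [Pnat, projMat, hlt]
      have hTj : T j = (A ⟨j,hlt⟩ ⬝ᵥ A ⟨j,hlt⟩)⁻¹ •
          Matrix.vecMulVec ((prodDesc (Pnat A) (j+1) (m-1-j)).mulVec (A ⟨j,hlt⟩)) (A ⟨j,hlt⟩) := by
        simp [hT, hlt]
      have hm1 : m - 1 - j = d := by omega
      rw [hP, Finset.sum_eq_sum_Ico_succ_bot hlt, hTj, hm1, h1, ih hd']
      rw [← mul_vecMulVec]
      set S := ∑ i ∈ Finset.Ico (m-d) m, T i
      set a := A ⟨j,hlt⟩
      set c := (a ⬝ᵥ a)⁻¹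
      rw [mul_sub, mul_one, mul_smul_comm]
      abel
  have hmain := key m le_rfl
  rw [Nat.sub_self] at hmain
  rw [Qfull, hmain]
  congr 1
  rw [← Finset.range_eq_Ico, ← Fin.sum_univ_eq_sum_range]
  have hTe : ∀ i : Fin m, T (i:ℕ) =
      (A i ⬝ᵥ A i)⁻¹ • Matrix.vecMulVec ((Qmat A i).mulVec (A i)) (A i) := by
    intro i
    simp [hT, i.isLt, Qmat]
  ext x y
  simp only [Matrix.mul_apply, Matrix.sum_apply, hTe, Matrix.smul_apply,
    Matrix.vecMulVec_apply, Matrix.transpose_apply, Mdiag, ASmat, Matrix.diagonal_apply,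
    smul_eq_mul]
  simp only [mul_ite, mul_zero, Finset.sum_ite_eq', Finset.mem_univ, if_true]
  refine Finset.sum_congr rfl fun i _ => ?_
  ring
end

section
/- The reverse-sweep product Q̄ = P_2 P_3 ⋯ P_{m-1} satisfies Q̄ = I - Ā_S^T M A, where Ā_S is the matrix whose i-th row is (Q̄_i a_i)^T with Q̄_1 = Q̄_m = 0, Q̄_2 = I, and Q̄_i = P_2 ⋯ P_{i-1} for 3 ≤ i ≤ m-1. -/
open Matrix Filter

noncomputable def gterm {m n : ℕ} (A : Matrix (Fin m) (Fin n) ℝ) (j : ℕ) :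
    Matrix (Fin n) (Fin n) ℝ :=
  if h : 1 + j < m then
    (A ⟨1 + j, h⟩ ⬝ᵥ A ⟨1 + j, h⟩)⁻¹ •
      (prodAsc (Pnat A) 1 j * Matrix.vecMulVec (A ⟨1 + j, h⟩) (A ⟨1 + j, h⟩))
  else 0

lemma key_lemma {m n : ℕ} (A : Matrix (Fin m) (Fin n) ℝ) :
    ∀ k, 1 + k ≤ m → prodAsc (Pnat A) 1 k = 1 - ∑ j ∈ Finset.range k, gterm A j := by
  intro k
  induction k with
  | zero => intro _; simp [prodAsc]
  | succ k ih =>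
    intro hk
    have hk' : 1 + k < m := by omega
    have hk'' : 1 + k ≤ m := by omega
    rw [prodAsc, ih hk'']
    have hP : Pnat A (1 + k) =
        1 - (A ⟨1 + k, hk'⟩ ⬝ᵥ A ⟨1 + k, hk'⟩)⁻¹ •
          Matrix.vecMulVec (A ⟨1 + k, hk'⟩) (A ⟨1 + k, hk'⟩) := by
      rw [Pnat, dif_pos hk']; rfl
    rw [hP, Finset.sum_range_succ]
    have hg : gterm A k =
        (A ⟨1 + k, hk'⟩ ⬝ᵥ A ⟨1 + k, hk'⟩)⁻¹ •
          (prodAsc (Pnat A) 1 k * Matrix.vecMulVec (A ⟨1 + k, hk'⟩) (A ⟨1 + k, hk'⟩)) := by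
      rw [gterm, dif_pos hk']
    rw [hg, ih hk'']
    noncomm_ring

lemma transpose_diag_mul {m n : ℕ} (B A : Matrix (Fin m) (Fin n) ℝ) (d : Fin m → ℝ) :
    Bᵀ * Matrix.diagonal d * A = ∑ i : Fin m, d i • Matrix.vecMulVec (B i) (A i) := by
  ext p q
  simp [Matrix.mul_apply, Matrix.diagonal_apply, Matrix.vecMulVec_apply,
    Matrix.sum_apply, Finset.mul_sum, Finset.sum_mul]
  apply Finset.sum_congr rfl
  intro i _
  ring

lemma vecMulVec_mulVec {n : ℕ} (Q : Matrix (Fin n) (Fin n) ℝ) (a : Fin n → ℝ) :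
    Matrix.vecMulVec (Q.mulVec a) a = Q * Matrix.vecMulVec a a := by
  ext p q
  simp [Matrix.vecMulVec_apply, Matrix.mulVec, Matrix.mul_apply, dotProduct,
    Finset.sum_mul, mul_assoc]

/-- `Q̄ = P_2 ⋯ P_{m-1} = I - Ā_Sᵀ M A`. -/
theorem stmt8 {m n : ℕ} (A : Matrix (Fin m) (Fin n) ℝ) (hm : 3 ≤ m)
    (hA : ∀ i, A i ≠ 0) :
    barQfull A = 1 - (barASmat A)ᵀ * Mdiag A * A := by
  obtain ⟨k, rfl⟩ : ∃ k, m = k + 3 := ⟨m - 3, by omega⟩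
  have hQ : barQfull A = 1 - ∑ j ∈ Finset.range (k + 1), gterm A j := by
    rw [barQfull]
    have : k + 3 - 2 = k + 1 := by omega
    rw [this]
    exact key_lemma A (k + 1) (by omega)
  rw [hQ]
  congr 1
  -- show (barASmat A)ᵀ * Mdiag A * A = ∑ gterm
  rw [Mdiag, transpose_diag_mul]
  -- define F : ℕ → matrix
  set F : ℕ → Matrix (Fin n) (Fin n) ℝ := fun i =>
    if h : i < k + 3 then
      (A ⟨i, h⟩ ⬝ᵥ A ⟨i, h⟩)⁻¹ • Matrix.vecMulVec (barASmat A ⟨i, h⟩) (A ⟨i, h⟩)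
    else 0 with hF
  have h1 : ∑ i : Fin (k + 3), (A i ⬝ᵥ A i)⁻¹ • Matrix.vecMulVec (barASmat A i) (A i)
      = ∑ i ∈ Finset.range (k + 3), F i := by
    rw [← Fin.sum_univ_eq_sum_range]
    apply Finset.sum_congr rfl
    intro i _
    rw [hF]
    simp [i.isLt]
  have hFtop : F (k + 2) = 0 := by
    have h2 : k + 2 < k + 3 := by omega
    show (if h : k + 2 < k + 3 then
      (A ⟨k + 2, h⟩ ⬝ᵥ A ⟨k + 2, h⟩)⁻¹ • Matrix.vecMulVec (barASmat A ⟨k + 2, h⟩) (A ⟨k + 2, h⟩)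
      else 0) = 0
    rw [dif_pos h2]
    have : barASmat A ⟨k + 2, h2⟩ = 0 := by
      rw [barASmat, barQmat]; simp
    rw [this]
    ext p q
    simp [Matrix.vecMulVec_apply]
  have hF0 : F 0 = 0 := by
    have h2 : (0 : ℕ) < k + 3 := by omega
    show (if h : (0:ℕ) < k + 3 then
      (A ⟨0, h⟩ ⬝ᵥ A ⟨0, h⟩)⁻¹ • Matrix.vecMulVec (barASmat A ⟨0, h⟩) (A ⟨0, h⟩)
      else 0) = 0
    rw [dif_pos h2]
    have : barASmat A ⟨0, h2⟩ = 0 := by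
      rw [barASmat, barQmat]; simp
    rw [this]
    ext p q
    simp [Matrix.vecMulVec_apply]
  have h2 : ∑ i ∈ Finset.range (k + 3), F i = ∑ j ∈ Finset.range (k + 1), gterm A j := by
    rw [Finset.sum_range_succ, hFtop, add_zero, Finset.sum_range_succ', hF0, add_zero]
    apply Finset.sum_congr rfl
    intro j hj
    rw [Finset.mem_range] at hj
    have hj3 : j + 1 < k + 3 := by omega
    have hj3' : 1 + j < k + 3 := by omega
    show (if h : j + 1 < k + 3 then
      (A ⟨j + 1, h⟩ ⬝ᵥ A ⟨j + 1, h⟩)⁻¹ • Matrix.vecMulVec (barASmat A ⟨j + 1, h⟩) (A ⟨j + 1, h⟩)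
      else 0) = gterm A j
    rw [dif_pos hj3]
    have hbarQ : barQmat A ⟨j + 1, hj3⟩ = prodAsc (Pnat A) 1 j := by
      rw [barQmat]
      have : ¬ ((j + 1 = 0) ∨ (j + 1 = k + 3 - 1)) := by omega
      rw [if_neg this]
      simp
    rw [barASmat, hbarQ, vecMulVec_mulVec, gterm, dif_pos hj3']
    have he : (⟨1 + j, hj3'⟩ : Fin (k + 3)) = ⟨j + 1, hj3⟩ := by
      simp [Nat.add_comm]
    rw [he]
  rw [h1, h2]
end

section
/- The compatible matrix Ω admits the factorization Ω = H_1 H_2 ⋯ H_m, where H_1 = I and for 1 < i ≤ m, H_i = Π_{j=1}^{i-1} E(j, i, -h_{j,i}), with E(j, i, c) the elementary matrix equal to the identity except for entry c in position (j,i). -/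
/-!
For `p ≠ k`, `ω_{pk}` is the alternating sum of the weights of the increasing chains from `p`
to `k`. Splitting off the last step of a chain gives `ω_{pk} = δ_{pk} - Σ_{r<k} ω_{pr} h_{rk}`.
On the other side, `H_k` differs from the identity only in column `k`, where it carries
`-h_{rk}` in the rows `r < k`; so right multiplication by `H_k` replaces column `k` by
`e_k - Σ_{r<k} h_{rk} · (column r)`. By the recursion, `H_1 ⋯ H_t` therefore agrees with `Ω` in
its first `t` columns and with the identity in the others.
-/

open Matrix Filter

/-- The compatible matrix `Ω`: `ω_{ii} = 1`, `ω_{ij} = 0` for `j < i`, and for `j > i`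
`ω_{ij} = Σ_{v=2}^{j-i+1} (-1)^{v-1} Σ_{chains i = k₁ < ⋯ < k_v = j} Π_s h_{k_s,k_{s+1}}`
(here the outer sum variable is shifted: `v = w + 2`, `w ∈ range (j - i)`). -/
noncomputable def OmegaMat {m n : ℕ} (A : Matrix (Fin m) (Fin n) ℝ) :
    Matrix (Fin m) (Fin m) ℝ :=
  fun i j =>
    if i = j then 1
    else if j < i then 0
    else ∑ w ∈ Finset.range ((j : ℕ) - (i : ℕ)), (-1 : ℝ) ^ (w + 1) *
      ∑ c : Fin (w + 2) → Fin m,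
        if (∀ s t : Fin (w + 2), s < t → c s < c t) ∧ c 0 = i ∧ c (Fin.last (w + 1)) = j
        then ∏ s : Fin (w + 1), hcoef A (c s.castSucc) (c s.succ) else 0

/-- The elementary matrix `E(j,i,c)`: identity except entry `c` at position `(j,i)`. -/
noncomputable def Efac {m : ℕ} (j i : Fin m) (c : ℝ) : Matrix (Fin m) (Fin m) ℝ :=
  1 + Matrix.single j i c

/-- `H_i = Π_{j=1}^{i-1} E(j, i, -h_{j,i})` (paper indexing; here `i : Fin m` 0-indexed). -/
noncomputable def Hfac {m n : ℕ} (A : Matrix (Fin m) (Fin n) ℝ) (i : Fin m) :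
    Matrix (Fin m) (Fin m) ℝ :=
  prodAsc (fun j => if hj : j < (i : ℕ) then
      Efac ⟨j, hj.trans i.isLt⟩ i (-(hcoef A ⟨j, hj.trans i.isLt⟩ i)) else 1) 0 (i : ℕ)

theorem Fin.strictMono_snoc_iff {α : Type*} [Preorder α] {n : ℕ} (c : Fin (n + 1) → α) (r : α) :
    StrictMono (Fin.snoc c r : Fin (n + 2) → α) ↔ StrictMono c ∧ c (Fin.last n) < r := by
  rw [Fin.strictMono_iff_lt_succ, Fin.forall_fin_succ', Fin.strictMono_iff_lt_succ]
  simp only [Fin.succ_castSucc, Fin.snoc_castSucc, Fin.succ_last, Fin.snoc_last]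

theorem Fin.add_le_of_strictMono {m n : ℕ} {c : Fin (n + 1) → Fin m} (hc : StrictMono c)
    (s : Fin (n + 1)) : (c 0 : ℕ) + s ≤ c s := by
  induction s using Fin.induction with
  | zero => simp
  | succ s ih =>
    have : (c s.castSucc : ℕ) < c s.succ := hc Fin.castSucc_lt_succ
    simp only [Fin.val_succ, Fin.val_castSucc] at ih ⊢
    omega

theorem prodAsc_Efac_eq_one_add_sum_single {m : ℕ} (i : Fin m) (c : Fin m → ℝ) {t : ℕ}
    (ht : t ≤ i) :
    prodAsc (fun j => if hj : j < (i : ℕ) then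
        Efac ⟨j, hj.trans i.isLt⟩ i (c ⟨j, hj.trans i.isLt⟩) else 1) 0 t =
      1 + ∑ j ∈ Finset.univ.filter (fun j : Fin m => (j : ℕ) < t), Matrix.single j i (c j) := by
  induction t with
  | zero => simp [prodAsc]
  | succ t ih =>
    have hti : t < (i : ℕ) := ht
    rw [prodAsc, zero_add, dif_pos hti, ih hti.le, Efac]
    set T : Fin m := ⟨t, hti.trans i.isLt⟩
    have hfilter : Finset.univ.filter (fun j : Fin m => (j : ℕ) < t + 1) =
        insert T (Finset.univ.filter fun j : Fin m => (j : ℕ) < t) := by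
      ext j
      simp only [Finset.mem_filter, Finset.mem_univ, true_and, Finset.mem_insert, Fin.ext_iff, T]
      omega
    have hcross : (∑ j ∈ Finset.univ.filter (fun j : Fin m => (j : ℕ) < t),
        Matrix.single j i (c j)) * Matrix.single T i (c T) = 0 := by
      have hiT : i ≠ T := Fin.ne_of_gt hti
      rw [Finset.sum_mul]
      exact Finset.sum_eq_zero fun j _ => Matrix.single_mul_single_of_ne (h := hiT) ..
    rw [hfilter, Finset.sum_insert (by simp [T])]
    simp only [mul_add, add_mul, mul_one, one_mul, hcross, add_zero]
    abel

section

variable {m n : ℕ} (A : Matrix (Fin m) (Fin n) ℝ)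

noncomputable def chainSum (p k : Fin m) (w : ℕ) : ℝ :=
  ∑ c : Fin (w + 2) → Fin m,
    if StrictMono c ∧ c 0 = p ∧ c (Fin.last (w + 1)) = k
    then ∏ s : Fin (w + 1), hcoef A (c s.castSucc) (c s.succ) else 0

theorem chainSum_eq_zero {p k : Fin m} {w : ℕ} (h : (k : ℕ) < p + w + 1) :
    chainSum A p k w = 0 := by
  refine Finset.sum_eq_zero fun c _ => if_neg ?_
  rintro ⟨hc, rfl, rfl⟩
  have := Fin.add_le_of_strictMono hc (Fin.last (w + 1))
  simp only [Fin.val_last] at this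
  omega

theorem chainSum_zero (p k : Fin m) :
    chainSum A p k 0 = if p < k then hcoef A p k else 0 := by
  rw [chainSum, Fintype.sum_eq_single ![p, k]]
  · simp [Fin.strictMono_iff_lt_succ]
  · rintro c hc
    refine if_neg fun ⟨_, h0, h1⟩ => hc ?_
    ext s
    fin_cases s <;> simp [h0, ← h1]

theorem chainSum_succ (p k : Fin m) (w : ℕ) :
    chainSum A p k (w + 1) = ∑ r ∈ Finset.Iio k, chainSum A p r w * hcoef A r k := by
  rw [chainSum, ← (Fin.snocEquiv fun _ => Fin m).sum_comp, Fintype.sum_prod_type,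
    Fintype.sum_eq_single k fun r hr => Finset.sum_eq_zero fun c _ => if_neg (by simp [hr])]
  simp only [Fin.snocEquiv, Equiv.coe_fn_mk, chainSum, Finset.sum_mul, ite_mul, zero_mul]
  rw [Finset.sum_comm]
  refine Finset.sum_congr rfl fun c _ => ?_
  have hprod : ∏ s : Fin (w + 2), hcoef A (Fin.snoc (α := fun _ => Fin m) c k s.castSucc)
      (Fin.snoc (α := fun _ => Fin m) c k s.succ) =
      (∏ s : Fin (w + 1), hcoef A (c s.castSucc) (c s.succ)) * hcoef A (c (Fin.last _)) k := by
    rw [Fin.prod_univ_castSucc]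
    simp only [Fin.succ_castSucc, Fin.snoc_castSucc, Fin.succ_last, Fin.snoc_last]
  have h0 : Fin.snoc (α := fun _ => Fin m) c k 0 = c 0 := Fin.snoc_castSucc (i := 0) ..
  by_cases hc : StrictMono c ∧ c 0 = p
  · simp only [Fin.strictMono_snoc_iff, h0, Fin.snoc_last, hc, hprod, true_and, and_true,
      Finset.sum_ite_eq, Finset.mem_Iio]
  · rw [Finset.sum_eq_zero fun r _ => if_neg fun h => hc ⟨h.1, h.2.1⟩]
    simp only [Fin.strictMono_snoc_iff, h0]
    exact if_neg fun h => hc ⟨h.1.1, h.2.1⟩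

theorem OmegaMat_eq_one_add_sum_chainSum (p k : Fin m) {N : ℕ} (hN : m ≤ N) :
    OmegaMat A p k = (1 : Matrix (Fin m) (Fin m) ℝ) p k +
      ∑ w ∈ Finset.range N, (-1 : ℝ) ^ (w + 1) * chainSum A p k w := by
  have htrunc : ∑ w ∈ Finset.range N, (-1 : ℝ) ^ (w + 1) * chainSum A p k w =
      ∑ w ∈ Finset.range ((k : ℕ) - p), (-1 : ℝ) ^ (w + 1) * chainSum A p k w := by
    refine (Finset.sum_subset (Finset.range_subset_range.2 (by omega)) fun w _ hw => ?_).symm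
    rw [Finset.mem_range, not_lt] at hw
    rw [chainSum_eq_zero A (by omega), mul_zero]
  rw [htrunc, OmegaMat]
  split_ifs with hpk hkp
  · subst hpk
    simp
  · simp [Matrix.one_apply_ne hpk, Nat.sub_eq_zero_of_le hkp.le]
  · rw [Matrix.one_apply_ne hpk, zero_add]
    -- `StrictMono c` unfolds to the chain condition written out in `OmegaMat`
    rfl

theorem OmegaMat_eq_one_sub_sum (p k : Fin m) :
    OmegaMat A p k = (1 : Matrix (Fin m) (Fin m) ℝ) p k -
      ∑ r ∈ Finset.Iio k, OmegaMat A p r * hcoef A r k := by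
  have hsum (r : Fin m) : ∑ w ∈ Finset.range m, (-1 : ℝ) ^ w * chainSum A p r w =
      (1 : Matrix (Fin m) (Fin m) ℝ) p r - OmegaMat A p r := by
    rw [OmegaMat_eq_one_add_sum_chainSum A p r le_rfl, sub_add_cancel_left,
      ← Finset.sum_neg_distrib]
    exact Finset.sum_congr rfl fun w _ => by ring
  have hone : ∑ r ∈ Finset.Iio k, (1 : Matrix (Fin m) (Fin m) ℝ) p r * hcoef A r k =
      chainSum A p k 0 := by
    simp [Matrix.one_apply, Finset.sum_ite_eq, chainSum_zero]
  calc OmegaMat A p k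
      = (1 : Matrix (Fin m) (Fin m) ℝ) p k - chainSum A p k 0 +
          ∑ w ∈ Finset.range m, (-1 : ℝ) ^ (w + 2) * chainSum A p k (w + 1) := by
        rw [OmegaMat_eq_one_add_sum_chainSum A p k (Nat.le_succ m), Finset.sum_range_succ']
        ring
    _ = (1 : Matrix (Fin m) (Fin m) ℝ) p k - chainSum A p k 0 +
          ∑ r ∈ Finset.Iio k, (∑ w ∈ Finset.range m, (-1 : ℝ) ^ w * chainSum A p r w) *
            hcoef A r k := by
        simp only [chainSum_succ, Finset.mul_sum, Finset.sum_mul]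
        rw [Finset.sum_comm]
        refine congrArg _ (Finset.sum_congr rfl fun r _ => Finset.sum_congr rfl fun w _ => ?_)
        ring
    _ = _ := by
        simp only [hsum, sub_mul, Finset.sum_sub_distrib, hone]
        ring

theorem Hfac_apply (i p q : Fin m) :
    Hfac A i p q =
      (1 : Matrix (Fin m) (Fin m) ℝ) p q - if q = i ∧ p < i then hcoef A p i else 0 := by
  rw [Hfac, prodAsc_Efac_eq_one_add_sum_single i (fun j => -hcoef A j i) le_rfl]
  rcases eq_or_ne q i with rfl | hqi
  · simp only [Fin.val_fin_lt, Matrix.add_apply, Matrix.sum_apply, Matrix.single_apply, and_true,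
      Finset.sum_ite_eq', Finset.mem_filter, Finset.mem_univ, true_and, sub_eq_add_neg,
      neg_ite, neg_zero]
  · simp [Matrix.sum_apply, hqi, hqi.symm]

theorem prodAsc_Hfac_apply {t : ℕ} (ht : t ≤ m) (p q : Fin m) :
    prodAsc (fun k => if hk : k < m then Hfac A ⟨k, hk⟩ else 1) 0 t p q =
      if (q : ℕ) < t then OmegaMat A p q else (1 : Matrix (Fin m) (Fin m) ℝ) p q := by
  induction t generalizing q with
  | zero => simp [prodAsc]
  | succ t ih =>
    have htm : t < m := ht
    rw [prodAsc, zero_add, dif_pos htm, Matrix.mul_apply]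
    simp only [Hfac_apply, mul_sub, Finset.sum_sub_distrib, ← Matrix.mul_apply, Matrix.mul_one,
      mul_ite, mul_zero]
    rcases eq_or_ne q ⟨t, htm⟩ with rfl | hq
    · simp only [true_and, ← Finset.sum_filter, Finset.filter_gt_eq_Iio]
      rw [if_pos t.lt_succ_self, OmegaMat_eq_one_sub_sum, ih htm.le, if_neg (lt_irrefl t)]
      refine congrArg _ (Finset.sum_congr rfl fun r hr => ?_)
      have hrt : (r : ℕ) < t := Fin.lt_def.1 (Finset.mem_Iio.1 hr)
      rw [ih htm.le, if_pos hrt]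
    · have hqt : (q : ℕ) ≠ t := fun h => hq (Fin.ext h)
      simp only [hq, false_and, if_false, Finset.sum_const_zero, sub_zero, ih htm.le,
        Nat.lt_succ_iff_lt_or_eq, hqt, or_false]

end

theorem stmt11_general {m n : ℕ} (A : Matrix (Fin m) (Fin n) ℝ) :
    OmegaMat A = prodAsc (fun k => if hk : k < m then Hfac A ⟨k, hk⟩ else 1) 0 m := by
  ext p q
  rw [prodAsc_Hfac_apply A le_rfl, if_pos q.isLt]

/-- `Ω = H_1 H_2 ⋯ H_m`. -/
theorem stmt11 {m n : ℕ} (A : Matrix (Fin m) (Fin n) ℝ) (hA : ∀ i, A i ≠ 0) :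
    OmegaMat A = prodAsc (fun k => if hk : k < m then Hfac A ⟨k, hk⟩ else 1) 0 m :=
  stmt11_general A
end

section
/- If A has no zero row, the symmetric Kaczmarz-Tanabe iteration can be written in matrix-vector form: defining C̄ = Ĉ + C - C A A^T M Ĉ, the composition of the forward sweep y → y + A^T C^T M (b - A y) followed by the backward sweep z → z + A^T Ĉ^T M (b - A z) equals y → y + A^T C̄^T M (b - A y). -/
open Matrix Filter

/-- with `C̄ = Ĉ + C - C A Aᵀ M Ĉ`, the forward sweep followed by the
backward sweep equals the single sweep with matrix `C̄`. -/
theorem stmt13 {m n : ℕ} (A : Matrix (Fin m) (Fin n) ℝ) (hA : ∀ i, A i ≠ 0)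
    (C Chat : Matrix (Fin m) (Fin m) ℝ) (b : Fin m → ℝ) (y : Fin n → ℝ) :
    (y + (Aᵀ * Cᵀ * Mdiag A).mulVec (b - A.mulVec y)) +
        (Aᵀ * Chatᵀ * Mdiag A).mulVec
          (b - A.mulVec (y + (Aᵀ * Cᵀ * Mdiag A).mulVec (b - A.mulVec y))) =
      y + (Aᵀ * (Chat + C - C * A * Aᵀ * Mdiag A * Chat)ᵀ * Mdiag A).mulVec
            (b - A.mulVec y) := by
  have h : (Mdiag A)ᵀ = Mdiag A := Matrix.diagonal_transpose _
  have hT : (Chat + C - C * A * Aᵀ * Mdiag A * Chat)ᵀ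
      = Chatᵀ + Cᵀ - Chatᵀ * Mdiag A * A * Aᵀ * Cᵀ := by
    simp [Matrix.transpose_mul, h, Matrix.mul_assoc]
  rw [hT]
  have expand : Aᵀ * (Chatᵀ + Cᵀ - Chatᵀ * Mdiag A * A * Aᵀ * Cᵀ) * Mdiag A
      = Aᵀ * Chatᵀ * Mdiag A + Aᵀ * Cᵀ * Mdiag A
        - (Aᵀ * Chatᵀ * Mdiag A) * (A * (Aᵀ * Cᵀ * Mdiag A)) := by
    simp only [Matrix.mul_add, Matrix.add_mul, Matrix.mul_sub, Matrix.sub_mul,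
      Matrix.mul_assoc]
  rw [expand]
  simp only [Matrix.mulVec_sub, Matrix.mulVec_add, Matrix.sub_mulVec,
    Matrix.add_mulVec, Matrix.mulVec_mulVec, Matrix.add_mul, Matrix.sub_mul,
    Matrix.smul_mul, Matrix.smul_mulVec, Matrix.mulVec_smul, Matrix.mul_assoc]
  abel
end

section
/- With C̄ = Ĉ + C - C A A^T M Ĉ as above, the full symmetric sweep satisfies P_2 P_3 ⋯ P_{m-1} P_m P_{m-1} ⋯ P_1 = I - A^T C̄^T M A, provided A_S = C A and Ā_S = Ĉ A. -/
open Matrix Filter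

/-! ### Auxiliary machinery -/

noncomputable def Emat {m n : ℕ} (A : Matrix (Fin m) (Fin n) ℝ) (k : ℕ) :
    Matrix (Fin n) (Fin n) ℝ :=
  if h : k < m then (A ⟨k, h⟩ ⬝ᵥ A ⟨k, h⟩)⁻¹ • Matrix.vecMulVec (A ⟨k, h⟩) (A ⟨k, h⟩) else 0

lemma Pnat_eq_aux {m n : ℕ} (A : Matrix (Fin m) (Fin n) ℝ) (k : ℕ) :
    Pnat A k = 1 - Emat A k := by
  unfold Pnat Emat projMat
  split <;> simp

lemma mul_vecMulVec_aux {n : ℕ} (M : Matrix (Fin n) (Fin n) ℝ) (a b : Fin n → ℝ) :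
    M * Matrix.vecMulVec a b = Matrix.vecMulVec (M.mulVec a) b := by
  ext j k
  simp only [Matrix.mul_apply, Matrix.vecMulVec_apply, Matrix.mulVec, dotProduct,
    Finset.sum_mul]
  exact Finset.sum_congr rfl fun l _ => by ring

lemma prodDesc_Pnat_aux {m n : ℕ} (A : Matrix (Fin m) (Fin n) ℝ) (k : ℕ) :
    prodDesc (Pnat A) 0 k =
      1 - ∑ i ∈ Finset.range k, prodDesc (Pnat A) (i + 1) (k - 1 - i) * Emat A i := by
  induction k with
  | zero => simp [prodDesc]
  | succ k ih =>
    have hstep : prodDesc (Pnat A) 0 (k + 1) = Pnat A k * prodDesc (Pnat A) 0 k := by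
      simp [prodDesc]
    rw [hstep, ih, Pnat_eq_aux, Finset.sum_range_succ]
    have h1 : prodDesc (Pnat A) (k + 1) (k + 1 - 1 - k) = 1 := by
      norm_num [prodDesc]
    have h2 : ∀ i ∈ Finset.range k,
        prodDesc (Pnat A) (i + 1) (k + 1 - 1 - i) * Emat A i =
          (1 - Emat A k) * (prodDesc (Pnat A) (i + 1) (k - 1 - i) * Emat A i) := by
      intro i hi
      rw [Finset.mem_range] at hi
      have e1 : k + 1 - 1 - i = (k - 1 - i) + 1 := by omega
      have e2 : i + 1 + (k - 1 - i) = k := by omega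
      rw [e1, show prodDesc (Pnat A) (i + 1) ((k - 1 - i) + 1)
            = Pnat A (i + 1 + (k - 1 - i)) * prodDesc (Pnat A) (i + 1) (k - 1 - i) from rfl,
          e2, Pnat_eq_aux, mul_assoc]
    rw [Finset.sum_congr rfl h2, ← Finset.mul_sum, h1, one_mul]
    noncomm_ring

lemma prodAsc_Pnat_aux {m n : ℕ} (A : Matrix (Fin m) (Fin n) ℝ) (lo k : ℕ) :
    prodAsc (Pnat A) lo k =
      1 - ∑ t ∈ Finset.range k, prodAsc (Pnat A) lo t * Emat A (lo + t) := by
  induction k with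
  | zero => simp [prodAsc]
  | succ k ih =>
    rw [show prodAsc (Pnat A) lo (k + 1) = prodAsc (Pnat A) lo k * Pnat A (lo + k) from rfl,
        Finset.sum_range_succ, Pnat_eq_aux, ih]
    noncomm_ring

lemma sum_outer_aux {m n : ℕ} (A B : Matrix (Fin m) (Fin n) ℝ) :
    ∑ i : Fin m, (A i ⬝ᵥ A i)⁻¹ • Matrix.vecMulVec (B i) (A i) = Bᵀ * Mdiag A * A := by
  rw [Matrix.mul_assoc]
  ext j k
  rw [Matrix.sum_apply, Matrix.mul_apply]
  refine Finset.sum_congr rfl fun i _ => ?_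
  rw [Mdiag, Matrix.diagonal_mul]
  simp only [Matrix.smul_apply, Matrix.vecMulVec_apply, Matrix.transpose_apply, smul_eq_mul]
  ring

lemma Qfull_eq_aux {m n : ℕ} (A : Matrix (Fin m) (Fin n) ℝ) :
    Qfull A = 1 - (ASmat A)ᵀ * Mdiag A * A := by
  rw [← sum_outer_aux A (ASmat A)]
  unfold Qfull
  rw [prodDesc_Pnat_aux]
  congr 1
  rw [← Fin.sum_univ_eq_sum_range
    (fun i => prodDesc (Pnat A) (i + 1) (m - 1 - i) * Emat A i) m]
  refine Finset.sum_congr rfl fun i _ => ?_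
  rw [Emat, dif_pos i.isLt]
  simp only [Fin.eta]
  rw [mul_smul_comm, mul_vecMulVec_aux]
  rfl

lemma barQfull_eq_aux {m n : ℕ} (A : Matrix (Fin m) (Fin n) ℝ) (hm : 3 ≤ m) :
    barQfull A = 1 - (barASmat A)ᵀ * Mdiag A * A := by
  rw [← sum_outer_aux A (barASmat A)]
  unfold barQfull
  rw [prodAsc_Pnat_aux]
  congr 1
  set F : ℕ → Matrix (Fin n) (Fin n) ℝ := fun i =>
    if h : i < m then (A ⟨i, h⟩ ⬝ᵥ A ⟨i, h⟩)⁻¹ •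
      Matrix.vecMulVec (barASmat A ⟨i, h⟩) (A ⟨i, h⟩) else 0 with hF
  have hfin : ∑ i : Fin m, (A i ⬝ᵥ A i)⁻¹ • Matrix.vecMulVec (barASmat A i) (A i)
      = ∑ i ∈ Finset.range m, F i := by
    rw [← Fin.sum_univ_eq_sum_range F m]
    refine Finset.sum_congr rfl fun i _ => ?_
    rw [hF]
    simp only [i.isLt, dif_pos, Fin.eta]
  rw [hfin]
  have hF0 : F 0 = 0 := by
    rw [hF]
    simp only [show (0:ℕ) < m by omega, dif_pos]
    have : barASmat A ⟨0, by omega⟩ = 0 := by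
      unfold barASmat barQmat
      simp [Matrix.zero_mulVec]
    rw [this]
    ext j k; simp [Matrix.vecMulVec_apply]
  have hFm1 : F (m - 1) = 0 := by
    rw [hF]
    simp only [show m - 1 < m by omega, dif_pos]
    have : barASmat A ⟨m - 1, by omega⟩ = 0 := by
      unfold barASmat barQmat
      simp [Matrix.zero_mulVec]
    rw [this]
    ext j k; simp [Matrix.vecMulVec_apply]
  have hsplit : ∑ i ∈ Finset.range m, F i = ∑ i ∈ Finset.Ico 1 (m - 1), F i := by
    rw [Finset.range_eq_Ico,
        ← Finset.sum_Ico_consecutive F (show (0:ℕ) ≤ 1 by omega) (show 1 ≤ m by omega),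
        ← Finset.sum_Ico_consecutive F (show (1:ℕ) ≤ m - 1 by omega)
          (show m - 1 ≤ m by omega)]
    have e1 : ∑ i ∈ Finset.Ico 0 1, F i = 0 := by
      rw [Finset.sum_Ico_eq_sum_range]
      simpa using hF0
    have e2 : ∑ i ∈ Finset.Ico (m - 1) m, F i = 0 := by
      rw [Finset.sum_Ico_eq_sum_range, show m - (m - 1) = 1 by omega]
      simpa using hFm1
    rw [e1, e2, zero_add, add_zero]
  rw [hsplit, Finset.sum_Ico_eq_sum_range, show m - 1 - 1 = m - 2 by omega]
  refine Finset.sum_congr rfl fun t ht => ?_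
  rw [Finset.mem_range] at ht
  have h1t : 1 + t < m := by omega
  rw [hF]
  simp only [dif_pos h1t]
  have hrow : barASmat A ⟨1 + t, h1t⟩ = (prodAsc (Pnat A) 1 t).mulVec (A ⟨1 + t, h1t⟩) := by
    unfold barASmat barQmat
    have : ¬((1 + t = 0) ∨ (1 + t = m - 1)) := by omega
    simp only [this, if_false, show 1 + t - 1 = t by omega]
  rw [Emat, dif_pos h1t, mul_smul_comm, mul_vecMulVec_aux, hrow]

/-- `P_2 ⋯ P_{m-1} P_m ⋯ P_1 = I - Aᵀ C̄ᵀ M A` with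
`C̄ = Ĉ + C - C A Aᵀ M Ĉ`, provided `A_S = C A` and `Ā_S = Ĉ A`. -/
theorem stmt14 {m n : ℕ} (A : Matrix (Fin m) (Fin n) ℝ) (hm : 3 ≤ m)
    (hA : ∀ i, A i ≠ 0) (C Chat : Matrix (Fin m) (Fin m) ℝ)
    (hC : ASmat A = C * A) (hChat : barASmat A = Chat * A) :
    barQfull A * Qfull A =
      1 - Aᵀ * (Chat + C - C * A * Aᵀ * Mdiag A * Chat)ᵀ * Mdiag A * A := by
  rw [Qfull_eq_aux, barQfull_eq_aux A hm, hC, hChat]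
  have hMt : (Mdiag A)ᵀ = Mdiag A := by
    unfold Mdiag; exact Matrix.diagonal_transpose _
  simp only [Matrix.transpose_mul, Matrix.transpose_add, Matrix.transpose_sub,
    Matrix.transpose_transpose, hMt]
  simp only [Matrix.sub_mul, Matrix.mul_sub, Matrix.add_mul, Matrix.mul_add,
    Matrix.mul_assoc, Matrix.mul_one, Matrix.one_mul, sub_eq_add_neg, neg_add,
    Matrix.neg_mul, Matrix.mul_neg, neg_neg]
  abel
end
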